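/- Let e ≥ 3 be odd and let m be a positive multiple of e. For every integer 0 ≤ j ≤ m−1, the e-core of the partition (3) ⊔ 2^j ⊔ 1^{2m−2j−2} (one part equal to 3, j parts equal to 2, and 2m−2j−2 parts equal to 1) is the partition (1) if and only if j ≡ 1 or −2 (mod e). -/

import Mathlib

namespace GUnBranching

/-- A partition, given by its (0-indexed) weakly decreasing, eventually zero
sequence of parts: `part k` is the (k+1)-st part `λ_{k+1}`. -/
structure Partition where
  part : ℕ → ℕ
  antitone : ∀ i j : ℕ, i ≤ j → part j ≤ part i
  eventually_zero : ∃ N : ℕ, ∀ n : ℕ, N ≤ n → part n = 0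

namespace Partition

/-- The set of boxes (row, column) (0-indexed) of the Young diagram of a partition. -/
def boxSet (p : Partition) : Set (ℕ × ℕ) := {b | b.2 < p.part b.1}

/-- The size `|λ|` of a partition: the number of boxes of its Young diagram. -/
noncomputable def size (p : Partition) : ℕ := p.boxSet.ncard

/-- The β-set `β(λ) = {λ_k - k + 1 : k ≥ 1}` (0-indexed: `{part k - k : k ∈ ℕ}`). -/
def betaSet (p : Partition) : Set ℤ := {z | ∃ k : ℕ, z = (p.part k : ℤ) - k}

/-- The charged β-set `{λ_k + s - k + 1 : k ≥ 1}` of `(λ, s)`. -/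
def chargedBetaSet (p : Partition) (s : ℤ) : Set ℤ :=
  {z | ∃ k : ℕ, z = (p.part k : ℤ) + s - k}

/-- The number of (nonzero) parts of a partition. -/
noncomputable def length (p : Partition) : ℕ := {k : ℕ | p.part k ≠ 0}.ncard

end Partition

/-- The empty partition `∅`. -/
def emptyPartition : Partition :=
  ⟨fun _ => 0, fun _ _ _ => le_rfl, ⟨0, fun _ _ => rfl⟩⟩

/-- The partition `3^a 2^b 1^c` (a parts equal to 3, b parts equal to 2, c parts equal to 1). -/
def threeTwoOne (a b c : ℕ) : Partition where
  part k := if k < a then 3 else if k < a + b then 2 else if k < a + b + c then 1 else 0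
  antitone i j h := by split_ifs <;> omega
  eventually_zero := ⟨a + b + c, fun n hn => by split_ifs <;> omega⟩

/-- The column partition `1^m`. -/
def column (m : ℕ) : Partition := threeTwoOne 0 0 m

/-- The staircase partition `Δ_t = (t, t-1, …, 2, 1)`. -/
def staircase (t : ℕ) : Partition where
  part k := t - k
  antitone i j h := Nat.sub_le_sub_left h t
  eventually_zero := ⟨t, fun n hn => Nat.sub_eq_zero_of_le hn⟩

/-- The partition `Δ_t ⊔ 1^r` (staircase with a column of `r` extra parts equal to 1). -/
def staircaseColumn (t r : ℕ) : Partition where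
  part k := if k < t then t - k else if k < t + r then 1 else 0
  antitone i j h := by split_ifs <;> omega
  eventually_zero := ⟨t + r, fun n hn => by split_ifs <;> omega⟩

/-- `p ⊔ 1^r` : append `r` extra parts equal to 1 to the partition `p`. -/
noncomputable def appendOnes (p : Partition) (r : ℕ) : Partition where
  part k := max (p.part k) (if k < p.length + r then 1 else 0)
  antitone i j h := max_le_max (p.antitone i j h) (by split_ifs <;> omega)
  eventually_zero := by
    obtain ⟨N, hN⟩ := p.eventually_zero
    refine ⟨max N (p.length + r), fun n hn => ?_⟩
    have h1 : p.part n = 0 := hN n (le_trans (le_max_left _ _) hn)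
    have h2 : ¬ n < p.length + r := by
      have := le_trans (le_max_right N (p.length + r)) hn
      omega
    simp [h1, h2]

/-- `mu` is obtained from `lam` by removing one rim `e`-hook: on β-sets, a bead `x`
with an empty spot at `x - e` is moved to `x - e`. -/
def RemoveHook (e : ℕ) (lam mu : Partition) : Prop :=
  ∃ x : ℤ, x ∈ lam.betaSet ∧ (x - e) ∉ lam.betaSet ∧
    mu.betaSet = insert (x - e) (lam.betaSet \ {x})

/-- A partition is an `e`-core if no rim `e`-hook can be removed from it. -/
def IsECore (e : ℕ) (p : Partition) : Prop := ∀ mu : Partition, ¬ RemoveHook e p mu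

/-- `core` is the `e`-core of `lam`: it is obtained from `lam` by repeatedly removing
rim `e`-hooks, and no further rim `e`-hook can be removed. -/
def HasECore (e : ℕ) (lam core : Partition) : Prop :=
  Relation.ReflTransGen (RemoveHook e) lam core ∧ IsECore e core

/-- `lam` and `mu` have the same `e`-core. -/
def SameECore (e : ℕ) (lam mu : Partition) : Prop :=
  ∃ core : Partition, HasECore e lam core ∧ HasECore e mu core

/-- `(q1, q2)` is the 2-quotient of `lam`: the odd (resp. even) β-numbers of `lam`,
transformed by `v ↦ (v+1)/2` (resp. `v ↦ v/2`), form the β-set of `q1` (resp. `q2`)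
for a suitable charge. -/
def IsTwoQuotient (lam q1 q2 : Partition) : Prop :=
  (∃ c : ℤ, q1.chargedBetaSet c = {z : ℤ | 2 * z - 1 ∈ lam.betaSet}) ∧
  (∃ c : ℤ, q2.chargedBetaSet c = {z : ℤ | 2 * z ∈ lam.betaSet})

/-- The charge `s_t`: `(-(t+1+e)/2, t/2)` for even `t`, `(-(t+1)/2, (t+e)/2)` for odd `t`. -/
def tauCharge (e t : ℕ) : ℤ × ℤ :=
  if t % 2 = 0 then (-(((t : ℤ) + 1 + e) / 2), (t : ℤ) / 2)
  else (-(((t : ℤ) + 1) / 2), ((t : ℤ) + e) / 2)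

/-- `bp` is the twisted 2-quotient `τ(lam)` of `lam`, a partition with 2-core `Δ_t`:
it is the 2-quotient for even `t` and the swapped 2-quotient for odd `t`; the
corresponding charge is `tauCharge e t`. -/
def IsTwistedQuotient (t : ℕ) (lam : Partition) (bp : Partition × Partition) : Prop :=
  HasECore 2 lam (staircase t) ∧
  (if t % 2 = 0 then IsTwoQuotient lam bp.1 bp.2 else IsTwoQuotient lam bp.2 bp.1)

/-- The abacus of a charged bipartition: positions are (column, row) where row
`0 : Fin 2` is the bottom row (first component, charge `s.1`) and row `1 : Fin 2`
the top row (second component, charge `s.2`). -/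
def abacus (bp : Partition × Partition) (s : ℤ × ℤ) : Set (ℤ × Fin 2) :=
  {b | b.1 ∈ (if b.2 = (0 : Fin 2) then bp.1.chargedBetaSet s.1 else bp.2.chargedBetaSet s.2)}

/-- `P` is an `e`-period of the abacus `A`: beads `(x, r 0), (x-1, r 1), …, (x-e+1, r (e-1))`
of `A` where `x` is the largest column containing a bead of `A`, `r i = 0` (bottom row)
whenever `(x - i, bottom)` is a bead of `A` (for `i < e-1`), and once in the bottom row the
period stays in the bottom row. -/
def IsEPeriodOf (e : ℕ) (A P : Set (ℤ × Fin 2)) : Prop :=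
  ∃ (x : ℤ) (r : ℕ → Fin 2),
    P = {b | ∃ i : ℕ, i < e ∧ b = ((x - i : ℤ), r i)} ∧
    (∀ i : ℕ, i < e → ((x - i : ℤ), r i) ∈ A) ∧
    (∀ b ∈ A, b.1 ≤ x) ∧
    (∀ i : ℕ, i + 1 < e → ((x - i : ℤ), (0 : Fin 2)) ∈ A → r i = 0) ∧
    (∀ i : ℕ, i + 1 < e → r i = 0 → r (i + 1) = 0)

/-- `P 0, P 1, P 2, …` is the sequence of `e`-periods of `A`:
each `P k` is the `e`-period of `A` minus the previous periods. -/
def IsPeriodSeq (e : ℕ) (A : Set (ℤ × Fin 2)) (P : ℕ → Set (ℤ × Fin 2)) : Prop :=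
  ∀ k : ℕ, IsEPeriodOf e (A \ ⋃ i ∈ Finset.range k, P i) (P k)

/-- The abacus `A` is totally `e`-periodic: the `k`-th `e`-period exists for every `k`. -/
def TotallyPeriodic (e : ℕ) (A : Set (ℤ × Fin 2)) : Prop :=
  ∃ P : ℕ → Set (ℤ × Fin 2), IsPeriodSeq e A P

/-- `P` is the `(k+1)`-st `e`-period of `A` (so `k = 0` gives the first `e`-period). -/
def IsKthPeriod (e : ℕ) (A : Set (ℤ × Fin 2)) (k : ℕ) (P : Set (ℤ × Fin 2)) : Prop :=
  ∃ Q : ℕ → Set (ℤ × Fin 2),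
    (∀ i : ℕ, i ≤ k → IsEPeriodOf e (A \ ⋃ j ∈ Finset.range i, Q j) (Q i)) ∧ Q k = P

/-- Shift a set of abacus positions one step to the right. -/
def shiftRight (P : Set (ℤ × Fin 2)) : Set (ℤ × Fin 2) := {b | (b.1 - 1, b.2) ∈ P}

/-- Edge of the `sl_∞`-crystal moving the `(k+1)`-st `e`-period one step to the right:
the shifted period must again be the `(k+1)`-st `e`-period of the resulting abacus. -/
def SlInfEdgeAt (e : ℕ) (s : ℤ × ℤ) (k : ℕ) (lam mu : Partition × Partition) : Prop :=
  TotallyPeriodic e (abacus lam s) ∧ TotallyPeriodic e (abacus mu s) ∧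
  ∃ P : Set (ℤ × Fin 2),
    IsKthPeriod e (abacus lam s) k P ∧
    abacus mu s = (abacus lam s \ P) ∪ shiftRight P ∧
    IsKthPeriod e (abacus mu s) k (shiftRight P)

/-- Edge of the `sl_∞`-crystal. -/
def SlInfEdge (e : ℕ) (s : ℤ × ℤ) (lam mu : Partition × Partition) : Prop :=
  ∃ k : ℕ, SlInfEdgeAt e s k lam mu

/-- A source vertex of the `sl_∞`-crystal: a vertex (totally `e`-periodic abacus)
with no incoming edge. -/
def IsSlInfSource (e : ℕ) (s : ℤ × ℤ) (bp : Partition × Partition) : Prop :=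
  TotallyPeriodic e (abacus bp s) ∧ ∀ lam : Partition × Partition, ¬ SlInfEdge e s lam bp

/-- A box of a bipartition: (component, row, column), all 0-indexed
(component `0 : Fin 2` is the first component `λ¹`). -/
abbrev Box := Fin 2 × ℕ × ℕ

/-- The component of a bipartition indexed by `j : Fin 2`. -/
def comp (bp : Partition × Partition) (j : Fin 2) : Partition :=
  if j = 0 then bp.1 else bp.2

/-- `b` is a box of the bipartition `bp`. -/
def IsBoxOf (bp : Partition × Partition) (b : Box) : Prop :=
  b.2.2 < (comp bp b.1).part b.2.1

/-- The (charged) content `ct(b) = y - x + s_j` of a box `b = (j, x, y)`. -/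
def content (s : ℤ × ℤ) (b : Box) : ℤ :=
  (b.2.2 : ℤ) - (b.2.1 : ℤ) + (if b.1 = 0 then s.1 else s.2)

/-- `b` is an addable box of the bipartition `bp`. -/
def IsAddable (bp : Partition × Partition) (b : Box) : Prop :=
  b.2.2 = (comp bp b.1).part b.2.1 ∧
  (b.2.1 = 0 ∨ (comp bp b.1).part b.2.1 < (comp bp b.1).part (b.2.1 - 1))

/-- `b` is a removable box of the bipartition `bp`. -/
def IsRemovable (bp : Partition × Partition) (b : Box) : Prop :=
  b.2.2 + 1 = (comp bp b.1).part b.2.1 ∧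
  (comp bp b.1).part (b.2.1 + 1) < (comp bp b.1).part b.2.1

/-- The total order on addable/removable boxes: `b ≤ b'` iff `b = b'`, or
`ct(b) < ct(b')`, or the contents are equal, `b` lies in the second component and
`b'` in the first. -/
def boxLE (s : ℤ × ℤ) (b b' : Box) : Prop :=
  b = b' ∨ content s b < content s b' ∨
    (content s b = content s b' ∧ b.1 = 1 ∧ b'.1 = 0)

/-- The set of addable or removable boxes of residue `i` (the letters of the `i`-word). -/
def IWord (e : ℕ) (s : ℤ × ℤ) (bp : Partition × Partition) (i : ZMod e) : Set Box :=
  {b | (IsAddable bp b ∨ IsRemovable bp b) ∧ ((content s b : ZMod e) = i)}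

/-- A removable box of residue `i` surviving the Kashiwara cancellation: reading the
`i`-word in increasing order and cancelling each removable box with a following addable
box (recursively cancelling adjacent removable-addable pairs), `b` is not cancelled.
Equivalently, every final segment of the `i`-word starting at `b` contains strictly
more removable than addable boxes. -/
def SurvivingRemovable (e : ℕ) (s : ℤ × ℤ) (bp : Partition × Partition)
    (i : ZMod e) (b : Box) : Prop :=
  b ∈ IWord e s bp i ∧ IsRemovable bp b ∧
  ∀ c ∈ IWord e s bp i, boxLE s b c →
    {d : Box | d ∈ IWord e s bp i ∧ IsAddable bp d ∧ boxLE s b d ∧ boxLE s d c}.ncard <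
    {d : Box | d ∈ IWord e s bp i ∧ IsRemovable bp d ∧ boxLE s b d ∧ boxLE s d c}.ncard

/-- The good removable `i`-box: the smallest removable `i`-box surviving the
Kashiwara cancellation. -/
def IsGoodRemovable (e : ℕ) (s : ℤ × ℤ) (bp : Partition × Partition)
    (i : ZMod e) (b : Box) : Prop :=
  SurvivingRemovable e s bp i b ∧
  ∀ b' : Box, SurvivingRemovable e s bp i b' → boxLE s b b'

/-- An addable box of residue `i` surviving the Kashiwara cancellation. -/
def SurvivingAddable (e : ℕ) (s : ℤ × ℤ) (bp : Partition × Partition)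
    (i : ZMod e) (b : Box) : Prop :=
  b ∈ IWord e s bp i ∧ IsAddable bp b ∧
  ∀ c ∈ IWord e s bp i, boxLE s c b →
    {d : Box | d ∈ IWord e s bp i ∧ IsRemovable bp d ∧ boxLE s c d ∧ boxLE s d b}.ncard <
    {d : Box | d ∈ IWord e s bp i ∧ IsAddable bp d ∧ boxLE s c d ∧ boxLE s d b}.ncard

/-- The good addable `i`-box: the largest addable `i`-box surviving the
Kashiwara cancellation. -/
def IsGoodAddable (e : ℕ) (s : ℤ × ℤ) (bp : Partition × Partition)
    (i : ZMod e) (b : Box) : Prop :=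
  SurvivingAddable e s bp i b ∧
  ∀ b' : Box, SurvivingAddable e s bp i b' → boxLE s b' b

/-- A source vertex of the `ŝl_e`-crystal: no good removable `i`-box for any residue `i`. -/
def IsSlESource (e : ℕ) (s : ℤ × ℤ) (bp : Partition × Partition) : Prop :=
  ∀ (i : ZMod e) (b : Box), ¬ IsGoodRemovable e s bp i b

/-- `bp'` is obtained from `bp` by adding the box `b`. -/
def AddBox (bp : Partition × Partition) (b : Box) (bp' : Partition × Partition) : Prop :=
  if b.1 = 0 then
    bp'.2 = bp.2 ∧ bp'.1.part = Function.update bp.1.part b.2.1 (bp.1.part b.2.1 + 1)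
  else
    bp'.1 = bp.1 ∧ bp'.2.part = Function.update bp.2.part b.2.1 (bp.2.part b.2.1 + 1)

/-- Dominance order: `Dominates mu la` means `la ⊴ mu`. -/
def Dominates (mu la : Partition) : Prop :=
  ∀ k : ℕ, ∑ i ∈ Finset.range k, la.part i ≤ ∑ i ∈ Finset.range k, mu.part i

/-!
For a partition with parts at most `3`, the β-set is `(-∞, 3]` with three holes, and removing
a rim `e`-hook moves one hole up by `e` onto a free position. Hence the multiset of residues
mod `e` of the holes is an invariant of hook removal. The holes of `(3) ⊔ 2^j ⊔ 1^{2m-2j-2}`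
are `1 - j`, `2` and `j + 2 - 2m ≡ j + 2`, those of `(1)` are `3, 2, 0`, which forces
`1 - j ≡ 3` or `1 - j ≡ 0 (mod e)`. Conversely, in either case the holes `1 - j` and
`j + 2 - 2m` can be moved up in steps of `e` to `3` and `0` (in the appropriate order) without
meeting another hole, and `(1)` is an `e`-core because `e ≥ 3`.
-/

namespace Partition

theorem strictMono_sub_part (p : Partition) : StrictMono fun k : ℕ => (k : ℤ) - p.part k :=
  strictMono_nat_of_lt_succ fun k => by have := p.antitone k (k + 1) k.le_succ; omega

theorem betaSet_injective : Function.Injective betaSet := by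
  intro p q h
  have hrange : Set.range (fun k : ℕ => (k : ℤ) - p.part k) =
      Set.range (fun k : ℕ => (k : ℤ) - q.part k) := by
    ext z
    have hz := congrArg (fun S : Set ℤ => -z ∈ S) h
    simp only [betaSet, Set.mem_ofPred_eq, eq_iff_iff] at hz
    simp only [Set.mem_range]
    constructor
    · rintro ⟨k, rfl⟩
      obtain ⟨l, hl⟩ := hz.1 ⟨k, by ring⟩
      exact ⟨l, by omega⟩
    · rintro ⟨k, rfl⟩
      obtain ⟨l, hl⟩ := hz.2 ⟨k, by ring⟩
      exact ⟨l, by omega⟩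
  have hpart : p.part = q.part := funext fun k => by
    have := congrFun ((p.strictMono_sub_part.range_inj q.strictMono_sub_part).1 hrange) k
    omega
  cases p
  cases q
  congr

end Partition

theorem betaSet_threeTwoOne (a b c : ℕ) :
    (threeTwoOne a b c).betaSet =
      Set.Iic 3 \ {3 - (a : ℤ), 2 - (a : ℤ) - b, 1 - (a : ℤ) - b - c} := by
  ext z
  simp only [Partition.betaSet, threeTwoOne, Set.mem_ofPred_eq, Set.mem_sdiff, Set.mem_Iic,
    Set.mem_insert_iff, Set.mem_singleton_iff]
  constructor
  · rintro ⟨k, rfl⟩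
    split_ifs <;> omega
  · rintro ⟨hz, hne⟩
    refine ⟨(if 4 - (a : ℤ) ≤ z then 3 - z else if 3 - (a : ℤ) - b ≤ z then 2 - z
      else if 2 - (a : ℤ) - b - c ≤ z then 1 - z else -z).toNat, ?_⟩
    split_ifs <;> omega

theorem exists_betaSet_eq_Iic_sdiff {p q r : ℤ} (hp : p ≤ 3) (hq : q ≤ 3) (hr : r ≤ 3)
    (hpq : p ≠ q) (hpr : p ≠ r) (hqr : q ≠ r) :
    ∃ μ : Partition, μ.betaSet = Set.Iic 3 \ {p, q, r} := by
  set hi := max p (max q r)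
  set lo := min p (min q r)
  set mid := p + q + r - hi - lo
  refine ⟨threeTwoOne (3 - hi).toNat (hi - mid - 1).toNat (mid - lo - 1).toNat, ?_⟩
  rw [betaSet_threeTwoOne]
  ext z
  simp only [Set.mem_sdiff, Set.mem_Iic, Set.mem_insert_iff, Set.mem_singleton_iff]
  omega

theorem betaSet_column_one : (column 1).betaSet = Set.Iic 3 \ {3, 2, 0} := by
  rw [column, betaSet_threeTwoOne]
  norm_num

theorem isECore_column_one {e : ℕ} (he : 3 ≤ e) : IsECore e (column 1) := by
  rintro mu ⟨x, hx, hxe, -⟩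
  rw [betaSet_column_one] at hx hxe
  simp only [Set.mem_sdiff, Set.mem_Iic, Set.mem_insert_iff, Set.mem_singleton_iff] at hx hxe
  omega

theorem removeHook_of_betaSet_eq_Iic_sdiff {e : ℕ} {N h : ℤ} {H : Set ℤ} {lam mu : Partition}
    (hh : h ∈ H) (hN : h + e ≤ N) (hfree : h + e ∉ H)
    (hl : lam.betaSet = Set.Iic N \ H)
    (hm : mu.betaSet = Set.Iic N \ insert (h + e) (H \ {h})) :
    RemoveHook e lam mu := by
  refine ⟨h + e, by rw [hl]; exact ⟨hN, hfree⟩, by simp [hl, hh], ?_⟩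
  rw [hm, hl, add_sub_cancel_right]
  have he : (e : ℤ) ≠ 0 := fun he => hfree (by rwa [he, add_zero])
  ext z
  simp only [Set.mem_insert_iff, Set.mem_sdiff, Set.mem_Iic, Set.mem_singleton_iff]
  grind

theorem reflTransGen_removeHook_of_hole_add_mul {e : ℕ} (he : 0 < e) {p q r : ℤ} (k : ℕ)
    (hp : p ≤ 3) (hq : q ≤ 3) (hpq : p ≠ q) (hk : r + e * k ≤ 3)
    (hpath : ∀ i ≤ k, r + e * i ≠ p ∧ r + e * i ≠ q) {lam mu : Partition}
    (hl : lam.betaSet = Set.Iic 3 \ {p, q, r})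
    (hm : mu.betaSet = Set.Iic 3 \ {p, q, r + e * k}) :
    Relation.ReflTransGen (RemoveHook e) lam mu := by
  induction k generalizing mu with
  | zero =>
    obtain rfl : mu = lam := Partition.betaSet_injective (by simpa [hl] using hm)
    exact .refl
  | succ k ih =>
    have hek : 0 ≤ (e : ℤ) * k := by positivity
    obtain ⟨hp', hq'⟩ := hpath k k.le_succ
    obtain ⟨hp'', hq''⟩ := hpath (k + 1) le_rfl
    push_cast [mul_add_one] at hk hm hp'' hq''
    obtain ⟨ν, hν⟩ := exists_betaSet_eq_Iic_sdiff hp hq (by linarith) hpq hp'.symm hq'.symm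
    refine (ih (by linarith) (fun i hi => hpath i (by omega)) hν).tail
      (removeHook_of_betaSet_eq_Iic_sdiff (h := r + e * k) (by simp) (by linarith) ?_ hν ?_)
    · simp only [Set.mem_insert_iff, Set.mem_singleton_iff]
      omega
    · rw [hm]
      congr 1
      ext z
      simp only [Set.mem_insert_iff, Set.mem_sdiff, Set.mem_singleton_iff]
      omega

theorem add_mul_ne_of_not_on_path {e k i : ℕ} {p r : ℤ} (hi : i ≤ k)
    (hp : p < r ∨ r + e * k < p ∨ (p : ZMod e) ≠ r) : r + e * i ≠ p := by
  rintro rfl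
  rcases hp with hp | hp | hp
  · have : 0 ≤ (e : ℤ) * i := by positivity
    linarith
  · have : (e : ℤ) * i ≤ e * k := by gcongr
    linarith
  · simp at hp

theorem reflTransGen_removeHook_of_hole_modEq {e : ℕ} (he : 0 < e) {p q r r' : ℤ}
    (hp : p ≤ 3) (hq : q ≤ 3) (hpq : p ≠ q) (hr : r ≤ r') (hr' : r' ≤ 3)
    (hmod : (r : ZMod e) = r')
    (hpfree : p < r ∨ r' < p ∨ (p : ZMod e) ≠ r)
    (hqfree : q < r ∨ r' < q ∨ (q : ZMod e) ≠ r)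
    {lam mu : Partition} (hl : lam.betaSet = Set.Iic 3 \ {p, q, r})
    (hm : mu.betaSet = Set.Iic 3 \ {p, q, r'}) :
    Relation.ReflTransGen (RemoveHook e) lam mu := by
  obtain ⟨c, hc⟩ := (ZMod.intCast_eq_intCast_iff_dvd_sub r r' e).1 hmod
  have hc0 : 0 ≤ c := by
    by_contra! hneg
    nlinarith
  obtain ⟨k, rfl⟩ := Int.eq_ofNat_of_zero_le hc0
  obtain rfl : r' = r + e * k := by linarith
  refine reflTransGen_removeHook_of_hole_add_mul he k hp hq hpq hr' (fun i hi => ?_) hl hm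
  exact ⟨add_mul_ne_of_not_on_path hi hpfree, add_mul_ne_of_not_on_path hi hqfree⟩

def HasHoleResidues (e : ℕ) (N : ℤ) (M : Multiset (ZMod e)) (lam : Partition) : Prop :=
  ∃ H : Finset ℤ, (∀ x ∈ H, x ≤ N) ∧ lam.betaSet = Set.Iic N \ ↑H ∧
    H.val.map (Int.cast : ℤ → ZMod e) = M

theorem HasHoleResidues.of_removeHook {e : ℕ} {N : ℤ} {M : Multiset (ZMod e)}
    {lam mu : Partition} (hlam : HasHoleResidues e N M lam) (h : RemoveHook e lam mu) :
    HasHoleResidues e N M mu := by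
  obtain ⟨H, hHN, hl, rfl⟩ := hlam
  obtain ⟨x, hx, hxe, hmu⟩ := h
  rw [hl] at hx hxe hmu
  have hxH : x - e ∈ H := by
    by_contra hxH
    exact hxe ⟨(sub_le_self x e.cast_nonneg).trans hx.1, hxH⟩
  have hxH' : x ∉ H.erase (x - e) := fun h => hx.2 (Finset.mem_of_mem_erase h)
  refine ⟨insert x (H.erase (x - e)), ?_, ?_, ?_⟩
  · simp only [Finset.mem_insert, Finset.mem_erase]
    rintro y (rfl | ⟨-, hy⟩)
    exacts [hx.1, hHN y hy]
  · rw [hmu]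
    ext z
    simp only [Set.mem_insert_iff, Set.mem_sdiff, Set.mem_Iic, Set.mem_singleton_iff,
      Finset.coe_insert, Finset.coe_erase]
    grind
  · rw [Finset.insert_val_of_notMem hxH', ← Finset.insert_erase hxH,
      Finset.insert_val_of_notMem (Finset.notMem_erase _ _), Multiset.map_cons,
      Multiset.map_cons, Finset.erase_insert_eq_erase, Finset.erase_idem]
    congr 1
    simp

theorem HasHoleResidues.of_reflTransGen {e : ℕ} {N : ℤ} {M : Multiset (ZMod e)}
    {lam mu : Partition} (hlam : HasHoleResidues e N M lam)
    (h : Relation.ReflTransGen (RemoveHook e) lam mu) : HasHoleResidues e N M mu := by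
  induction h with
  | refl => exact hlam
  | tail _ hstep ih => exact ih.of_removeHook hstep

theorem hasHoleResidues_of_betaSet_eq {e : ℕ} {N a b c : ℤ} {lam : Partition}
    (ha : a ≤ N) (hb : b ≤ N) (hc : c ≤ N) (hab : a ≠ b) (hac : a ≠ c) (hbc : b ≠ c)
    (hl : lam.betaSet = Set.Iic N \ {a, b, c}) :
    HasHoleResidues e N {(a : ZMod e), (b : ZMod e), (c : ZMod e)} lam := by
  refine ⟨{a, b, c}, ?_, by simpa using hl, ?_⟩
  · simp only [Finset.mem_insert, Finset.mem_singleton]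
    rintro x (rfl | rfl | rfl) <;> assumption
  · rw [Finset.insert_val_of_notMem (by simp [hab, hac]),
      Finset.insert_val_of_notMem (by simp [hbc])]
    simp

theorem HasHoleResidues.unique {e : ℕ} {N : ℤ} {M M' : Multiset (ZMod e)} {lam : Partition}
    (h : HasHoleResidues e N M lam) (h' : HasHoleResidues e N M' lam) : M = M' := by
  obtain ⟨H, hHN, hl, rfl⟩ := h
  obtain ⟨H', hHN', hl', rfl⟩ := h'
  obtain rfl : H = H' := by
    ext x
    have hx := congrArg (x ∈ ·) (hl.symm.trans hl')
    simp only [Set.mem_sdiff, Set.mem_Iic, Finset.mem_coe, eq_iff_iff] at hx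
    by_cases hxN : x ≤ N
    · exact not_iff_not.mp (by simpa [hxN] using hx)
    · exact iff_of_false (fun h => hxN (hHN x h)) (fun h => hxN (hHN' x h))
  rfl

theorem hasHoleResidues_column_one (e : ℕ) :
    HasHoleResidues e 3 {3, 2, 0} (column 1) := by
  simpa using hasHoleResidues_of_betaSet_eq (e := e) (by norm_num) (by norm_num) (by norm_num)
    (by norm_num) (by norm_num) (by norm_num) betaSet_column_one

theorem reflTransGen_removeHook_column_one_of_residues_three_zero {e : ℕ} (he : 1 < e)
    {a b : ℤ} (ha : (a : ZMod e) = 3) (hb : (b : ZMod e) = 0) (hba : b < a) (ha3 : a ≤ 3)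
    (hb0 : b ≤ 0) {lam : Partition} (hl : lam.betaSet = Set.Iic 3 \ {a, 2, b}) :
    Relation.ReflTransGen (RemoveHook e) lam (column 1) := by
  have : Fact (1 < e) := ⟨he⟩
  have he0 : 0 < e := by omega
  have h23 : (2 : ZMod e) ≠ 3 := fun h => one_ne_zero (by linear_combination -h)
  obtain ⟨μ, hμ⟩ := exists_betaSet_eq_Iic_sdiff (p := 2) (q := b) (r := 3) (by norm_num)
    (by omega) le_rfl (by omega) (by norm_num) (by omega)
  have hmove_a := reflTransGen_removeHook_of_hole_modEq he0 (p := 2) (q := b) (by norm_num)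
    (by omega) (by omega) (by omega) le_rfl (by simpa using ha)
    (Or.inr (Or.inr (by simpa [ha] using h23))) (Or.inl hba)
    (by rw [hl, Set.insert_comm a, Set.pair_comm a]) hμ
  have hmove_b := reflTransGen_removeHook_of_hole_modEq he0 (p := 2) (q := 3) (by norm_num)
    le_rfl (by norm_num) hb0 (by norm_num) (by simpa using hb) (Or.inr (Or.inl (by norm_num)))
    (Or.inr (Or.inl (by norm_num)))
    (by rw [hμ, Set.pair_comm b]) (by rw [betaSet_column_one, Set.insert_comm])
  exact hmove_a.trans hmove_b

theorem reflTransGen_removeHook_column_one_of_residues_zero_three {e : ℕ} (he : 1 < e)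
    {a b : ℤ} (ha : (a : ZMod e) = 0) (hb : (b : ZMod e) = 3) (h3 : (3 : ZMod e) ≠ 0)
    (hba : b < a) (ha0 : a ≤ 0) {lam : Partition} (hl : lam.betaSet = Set.Iic 3 \ {a, 2, b}) :
    Relation.ReflTransGen (RemoveHook e) lam (column 1) := by
  have : Fact (1 < e) := ⟨he⟩
  have he0 : 0 < e := by omega
  have h23 : (2 : ZMod e) ≠ 3 := fun h => one_ne_zero (by linear_combination -h)
  obtain ⟨μ, hμ⟩ := exists_betaSet_eq_Iic_sdiff (p := 2) (q := b) (r := 0) (by norm_num)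
    (by omega) (by norm_num) (by omega) (by norm_num) (by omega)
  have hmove_a := reflTransGen_removeHook_of_hole_modEq he0 (p := 2) (q := b) (r := a)
    (by norm_num) (by omega) (by omega) ha0 (by norm_num) (by simpa using ha)
    (Or.inr (Or.inl (by norm_num))) (Or.inl hba)
    (by rw [hl, Set.insert_comm a, Set.pair_comm a]) hμ
  have hmove_b := reflTransGen_removeHook_of_hole_modEq he0 (p := 2) (q := 0) (r := b)
    (r' := 3) (by norm_num) (by norm_num) (by norm_num) (by omega) le_rfl (by simpa using hb)
    (Or.inr (Or.inr (by simpa [hb] using h23))) (Or.inr (Or.inr (by simpa [hb] using h3.symm)))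
    (by rw [hμ, Set.pair_comm b]) (by rw [betaSet_column_one, Set.insert_comm, Set.pair_comm 3])
  exact hmove_a.trans hmove_b

theorem intCast_eq_three_or_zero_of_reflTransGen_column_one {e : ℕ} {a b : ℤ} {lam : Partition}
    (ha : a ≤ 3) (hb : b ≤ 3) (ha2 : a ≠ 2) (hab : a ≠ b) (hb2 : b ≠ 2)
    (hl : lam.betaSet = Set.Iic 3 \ {a, 2, b})
    (h : Relation.ReflTransGen (RemoveHook e) lam (column 1)) :
    (a : ZMod e) = 3 ∨ (a : ZMod e) = 0 := by
  have hres := ((hasHoleResidues_of_betaSet_eq ha (by norm_num) hb ha2 hab hb2.symm hl)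
    |>.of_reflTransGen h).unique (hasHoleResidues_column_one e)
  simp only [Multiset.insert_eq_cons, Int.cast_ofNat] at hres
  rw [Multiset.cons_swap, Multiset.cons_swap 3, Multiset.cons_inj_right] at hres
  have hmem : (a : ZMod e) ∈ (3 ::ₘ {0} : Multiset (ZMod e)) :=
    hres ▸ Multiset.mem_cons_self _ _
  simpa using hmem

theorem ecore_three_two_column_one_iff_general
    (e m : ℕ) (he3 : 3 ≤ e) (hem : e ∣ m)
    (j : ℕ) (hj : j + 1 ≤ m) :
    HasECore e (threeTwoOne 1 j (2 * m - 2 * j - 2)) (column 1) ↔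
      (j % e = 1 ∨ (j + 2) % e = 0) := by
  have : Fact (1 < e) := ⟨by omega⟩
  have hm : (m : ZMod e) = 0 := (ZMod.natCast_eq_zero_iff m e).2 hem
  have hlam : (threeTwoOne 1 j (2 * m - 2 * j - 2)).betaSet =
      Set.Iic 3 \ {1 - (j : ℤ), 2, (j : ℤ) + 2 - 2 * m} := by
    rw [betaSet_threeTwoOne]
    congr 1
    ext z
    simp only [Set.mem_insert_iff, Set.mem_singleton_iff]
    omega
  have hj1 : j % e = 1 ↔ (j : ZMod e) = 1 := by
    rw [← Nat.cast_one (R := ZMod e), ZMod.natCast_eq_natCast_iff',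
      Nat.one_mod_eq_one.2 (by omega)]
  have hj2 : (j + 2) % e = 0 ↔ (j : ZMod e) + 2 = 0 := by
    rw [← Nat.dvd_iff_mod_eq_zero, ← ZMod.natCast_eq_zero_iff]
    push_cast
    rfl
  rw [hj1, hj2]
  constructor
  · rintro ⟨hcore, -⟩
    rcases intCast_eq_three_or_zero_of_reflTransGen_column_one (by omega) (by omega) (by omega)
      (by omega) (by omega) hlam hcore with h | h <;> push_cast at h
    · exact .inr (by linear_combination -h)
    · exact .inl (by linear_combination -h)
  · intro h
    refine ⟨?_, isECore_column_one he3⟩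
    by_cases hA : (j : ZMod e) + 2 = 0
    · exact reflTransGen_removeHook_column_one_of_residues_three_zero (by omega)
        (by push_cast; linear_combination -hA) (by push_cast [hm]; linear_combination hA)
        (by omega) (by omega) (by omega) hlam
    · have hB : (j : ZMod e) = 1 := h.resolve_right hA
      have hj0 : j ≠ 0 := by rintro rfl; simp at hB
      exact reflTransGen_removeHook_column_one_of_residues_zero_three (by omega)
        (by push_cast; linear_combination -hB) (by push_cast [hm]; linear_combination hB)
        (fun h3 => hA (by linear_combination hB + h3)) (by omega) (by omega) hlam

/-- For `e ≥ 3` odd and `m` a positive multiple of `e`, and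
`0 ≤ j ≤ m-1`, the `e`-core of `(3) ⊔ 2^j ⊔ 1^{2m-2j-2}` is the partition `(1)` iff
`j ≡ 1` or `-2 (mod e)`. -/
theorem ecore_three_two_column_one_iff
    (e m : ℕ) (he : Odd e) (he3 : 3 ≤ e) (hm : 0 < m) (hem : e ∣ m)
    (j : ℕ) (hj : j + 1 ≤ m) :
    HasECore e (threeTwoOne 1 j (2 * m - 2 * j - 2)) (column 1) ↔
      (j % e = 1 ∨ (j + 2) % e = 0) :=
  ecore_three_two_column_one_iff_general e m he3 hem j hj

end GUnBranching
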